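/- Assume Ric_G(e) < 0 (so ρ ≥ 1). Then every set E' of permissible insertions with Ric_{G+E'}(e) > 0 satisfies |E'| ≥ (ρ+1)/(2(a+b)), where a = q/(deg_G(u)+1) and b = q/(deg_G(v)+1). -/

import Mathlib

open Finset
open scoped Classical

variable {V : Type*}

/-- The open neighborhood of `u` in `G`, as a finset. -/
noncomputable def nbrF [Fintype V] (G : SimpleGraph V) (u : V) : Finset V :=
  Finset.univ.filter fun x => G.Adj u x

/-- The degree of `u` in `G`. -/
noncomputable def degG [Fintype V] (G : SimpleGraph V) (u : V) : ℕ := (nbrF G u).card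

/-- The closed neighborhood `N[u]` of `u` in `G`. -/
noncomputable def cnbr [Fintype V] (G : SimpleGraph V) (u : V) : Finset V :=
  insert u (nbrF G u)

/-- A transport plan for `(G,u,v)`: nonnegative, with row sums `1/(deg u + 1)` over
`N[u]` and column sums `1/(deg v + 1)` over `N[v]`. -/
def IsPlanG [Fintype V] (G : SimpleGraph V) (u v : V) (z : V → V → ℝ) : Prop :=
  (∀ x y, 0 ≤ z x y) ∧
  (∀ x ∈ cnbr G u, ∑ y ∈ cnbr G v, z x y = 1 / ((degG G u : ℝ) + 1)) ∧
  (∀ y ∈ cnbr G v, ∑ x ∈ cnbr G u, z x y = 1 / ((degG G v : ℝ) + 1))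

/-- The cost of a transport plan, with respect to shortest-path distance in `G`. -/
noncomputable def planCostG [Fintype V] (G : SimpleGraph V) (u v : V) (z : V → V → ℝ) : ℝ :=
  ∑ x ∈ cnbr G u, ∑ y ∈ cnbr G v, (G.dist x y : ℝ) * z x y

/-- The earth mover's distance `EMD_G(u,v)`: the minimum cost of a transport plan. -/
noncomputable def EMDG [Fintype V] (G : SimpleGraph V) (u v : V) : ℝ :=
  sInf {t | ∃ z, IsPlanG G u v z ∧ planCostG G u v z = t}

/-- The Ollivier–Ricci curvature of the edge `{u,v}`. -/
noncomputable def RicG [Fintype V] (G : SimpleGraph V) (u v : V) : ℝ :=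
  1 - EMDG G u v

/-- The graph obtained from `G` by inserting every permissible pair `{x,y}` with
`x ∈ N_G(u)\{v}`, `y ∈ N_G(v)\{u}`, `x ≠ y`, `{x,y} ∉ E(G)`, as a new edge. -/
def addPerm (G : SimpleGraph V) (u v : V) : SimpleGraph V :=
  G ⊔ SimpleGraph.fromRel (fun x y => G.Adj u x ∧ x ≠ v ∧ G.Adj v y ∧ y ≠ u)

/-!
Inserting edges between `N(u)` and `N(v)` changes neither closed neighbourhood, so `G` and `G'`
have the same transport plans. Let `D` be the graph of inserted edges. Since `dist_G ≤ 3` on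
`N[u] × N[v]`, one gets `dist_G(x,y) ≤ dist_{G'}(x,y) + deg_D x + deg_D y`; integrating against a
plan, the marginals and the handshake lemma give
`EMD_G ≤ EMD_{G'} + 2|E'| (1/(deg u + 1) + 1/(deg v + 1))`. Multiplying by `q` and using
`EMD_{G'} < 1` yields `ρ < 2|E'|(a + b)`, and `ρ` is an integer.
-/

namespace SimpleGraph

variable [Fintype V] {G G' D : SimpleGraph V}

lemma adj_or_degree_pos_of_le_sup (hle : G' ≤ G ⊔ D) {x y : V} (h : G'.Adj x y) :
    G.Adj x y ∨ 0 < D.degree x ∧ 0 < D.degree y := by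
  refine (hle h).imp id fun hD => ⟨?_, ?_⟩
  · exact (D.degree_pos_iff_exists_adj x).mpr ⟨y, hD⟩
  · exact (D.degree_pos_iff_exists_adj y).mpr ⟨x, hD.symm⟩

/-- A shortest `G'`-path of length at most `2` has all its edges at `x` or `y`, so either it
lies in `G` or one of `x`, `y` carries an edge of `D`, which pays for a `G`-path of length `3`. -/
lemma dist_le_dist_add_degree_of_le_sup (hle : G ≤ G') (hle' : G' ≤ G ⊔ D) {x y : V}
    (hr : G.Reachable x y) (h3 : G.dist x y ≤ 3) :
    G.dist x y ≤ G'.dist x y + D.degree x + D.degree y := by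
  obtain ⟨p, hp⟩ := (hr.mono hle).exists_walk_length_eq_dist
  rw [← hp]
  cases p with
  | nil => simp
  | cons hxw q =>
    cases q with
    | nil =>
      simp only [Walk.length_cons, Walk.length_nil]
      rcases adj_or_degree_pos_of_le_sup hle' hxw with hG | ⟨hx, hy⟩
      · rw [dist_eq_one_iff_adj.mpr hG]
        omega
      · omega
    | cons hwy r =>
      cases r with
      | nil =>
        simp only [Walk.length_cons, Walk.length_nil]
        rcases adj_or_degree_pos_of_le_sup hle' hxw with hxwG | ⟨hx, -⟩
        · rcases adj_or_degree_pos_of_le_sup hle' hwy with hwyG | ⟨-, hy⟩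
          · have := dist_le (Walk.cons hxwG (Walk.cons hwyG Walk.nil))
            simp only [Walk.length_cons, Walk.length_nil] at this
            omega
          · omega
        · omega
      | cons =>
        simp only [Walk.length_cons]
        omega

lemma sum_degree_le_two_mul_ncard_edgeSet (H : SimpleGraph V) (s : Finset V) :
    ∑ x ∈ s, (H.degree x : ℝ) ≤ 2 * H.edgeSet.ncard := by
  calc ∑ x ∈ s, (H.degree x : ℝ) ≤ ∑ x, (H.degree x : ℝ) :=
        sum_le_univ_sum_of_nonneg fun _ => Nat.cast_nonneg _
    _ = 2 * H.edgeSet.ncard := by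
        rw [← coe_edgeFinset, Set.ncard_coe_finset]
        exact_mod_cast H.sum_degrees_eq_twice_card_edges

end SimpleGraph

lemma addPerm_comm (G : SimpleGraph V) (u v : V) : addPerm G u v = addPerm G v u := by
  ext x y
  simp only [addPerm, SimpleGraph.sup_adj, SimpleGraph.fromRel_adj]
  tauto

section Transport

variable [Fintype V] {G G' D : SimpleGraph V} {u v : V}

lemma card_cnbr (G : SimpleGraph V) (u : V) : #(cnbr G u) = degG G u + 1 := by
  rw [cnbr, card_insert_of_notMem (by simp [nbrF]), degG]

lemma nbrF_eq_of_le_addPerm (hle : G ≤ G') (hle' : G' ≤ addPerm G u v) :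
    nbrF G' u = nbrF G u := by
  ext x
  simp only [nbrF, mem_filter, mem_univ, true_and]
  refine ⟨fun h => ?_, fun h => hle h⟩
  simpa [addPerm, SimpleGraph.fromRel_adj] using hle' h

lemma isPlanG_congr (hu : nbrF G' u = nbrF G u) (hv : nbrF G' v = nbrF G v)
    (z : V → V → ℝ) : IsPlanG G' u v z ↔ IsPlanG G u v z := by
  simp only [IsPlanG, cnbr, degG, hu, hv]

lemma exists_isPlanG (G : SimpleGraph V) (u v : V) : ∃ z, IsPlanG G u v z := by
  refine ⟨fun _ _ => 1 / ((degG G u : ℝ) + 1) * (1 / ((degG G v : ℝ) + 1)),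
    fun _ _ => by positivity, fun x _ => ?_, fun y _ => ?_⟩ <;>
  · rw [sum_const, card_cnbr, nsmul_eq_mul]
    push_cast
    field_simp

lemma planCostG_nonneg {z : V → V → ℝ} (hz : ∀ x y, 0 ≤ z x y) :
    0 ≤ planCostG G u v z :=
  sum_nonneg fun x _ => sum_nonneg fun y _ => mul_nonneg (Nat.cast_nonneg _) (hz x y)

lemma EMDG_le_planCostG {z : V → V → ℝ} (hz : IsPlanG G u v z) :
    EMDG G u v ≤ planCostG G u v z :=
  csInf_le ⟨0, by rintro _ ⟨z', hz', rfl⟩; exact planCostG_nonneg hz'.1⟩ ⟨z, hz, rfl⟩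

lemma EMDG_le_add_of_planCostG_le (hu : nbrF G' u = nbrF G u) (hv : nbrF G' v = nbrF G v)
    (c : ℝ) (h : ∀ z, IsPlanG G u v z → planCostG G u v z ≤ planCostG G' u v z + c) :
    EMDG G u v ≤ EMDG G' u v + c := by
  rw [← sub_le_iff_le_add]
  obtain ⟨z₀, hz₀⟩ := exists_isPlanG G' u v
  refine le_csInf ⟨_, z₀, hz₀, rfl⟩ ?_
  rintro _ ⟨z, hz, rfl⟩
  have hzG := (isPlanG_congr hu hv z).mp hz
  linarith [EMDG_le_planCostG hzG, h z hzG]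

lemma sum_sum_add_mul_of_isPlanG {z : V → V → ℝ} (hz : IsPlanG G u v z) (f g : V → ℝ) :
    ∑ x ∈ cnbr G u, ∑ y ∈ cnbr G v, (f x + g y) * z x y =
      (∑ x ∈ cnbr G u, f x) / (degG G u + 1) + (∑ y ∈ cnbr G v, g y) / (degG G v + 1) := by
  simp only [add_mul, sum_add_distrib]
  rw [div_eq_mul_one_div, div_eq_mul_one_div _ ((degG G v : ℝ) + 1), sum_mul, sum_mul,
    sum_comm (s := cnbr G u) (f := fun x y => g y * z x y)]
  congr 1
  · refine sum_congr rfl fun x hx => ?_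
    rw [← hz.2.1 x hx, mul_sum]
  · refine sum_congr rfl fun y hy => ?_
    rw [← hz.2.2 y hy, mul_sum]

lemma exists_walk_length_le_one_of_mem_cnbr {x : V} (hx : x ∈ cnbr G u) :
    ∃ p : G.Walk u x, p.length ≤ 1 := by
  rcases mem_insert.mp hx with rfl | hx
  · exact ⟨.nil, by simp⟩
  · exact ⟨.cons (mem_filter.mp hx).2 .nil, by simp⟩

lemma dist_le_three_of_mem_cnbr (huv : G.Adj u v) {x y : V} (hx : x ∈ cnbr G u)
    (hy : y ∈ cnbr G v) : G.Reachable x y ∧ G.dist x y ≤ 3 := by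
  obtain ⟨p, hp⟩ := exists_walk_length_le_one_of_mem_cnbr hx
  obtain ⟨r, hr⟩ := exists_walk_length_le_one_of_mem_cnbr hy
  let w := p.reverse.append (.cons huv r)
  refine ⟨⟨w⟩, (SimpleGraph.dist_le w).trans ?_⟩
  simp only [w, SimpleGraph.Walk.length_append, SimpleGraph.Walk.length_reverse,
    SimpleGraph.Walk.length_cons]
  omega

lemma planCostG_le_add_ncard_edgeSet (hle : G ≤ G') (hle' : G' ≤ G ⊔ D)
    (hu : nbrF G' u = nbrF G u) (hv : nbrF G' v = nbrF G v) (huv : G.Adj u v)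
    {z : V → V → ℝ} (hz : IsPlanG G u v z) :
    planCostG G u v z ≤ planCostG G' u v z +
      2 * D.edgeSet.ncard * (1 / ((degG G u : ℝ) + 1) + 1 / ((degG G v : ℝ) + 1)) := by
  calc planCostG G u v z
      ≤ ∑ x ∈ cnbr G u, ∑ y ∈ cnbr G v,
          ((G'.dist x y : ℝ) + ((D.degree x : ℝ) + D.degree y)) * z x y := by
        refine sum_le_sum fun x hx => sum_le_sum fun y hy => ?_
        obtain ⟨hr, h3⟩ := dist_le_three_of_mem_cnbr huv hx hy
        have := SimpleGraph.dist_le_dist_add_degree_of_le_sup hle hle' hr h3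
        exact mul_le_mul_of_nonneg_right (by rw [← add_assoc]; exact_mod_cast this) (hz.1 x y)
    _ = planCostG G' u v z + ((∑ x ∈ cnbr G u, (D.degree x : ℝ)) / (degG G u + 1) +
          (∑ y ∈ cnbr G v, (D.degree y : ℝ)) / (degG G v + 1)) := by
        have hcu : cnbr G' u = cnbr G u := by rw [cnbr, cnbr, hu]
        have hcv : cnbr G' v = cnbr G v := by rw [cnbr, cnbr, hv]
        rw [← sum_sum_add_mul_of_isPlanG hz, planCostG, hcu, hcv, ← sum_add_distrib]
        exact sum_congr rfl fun x _ => by rw [← sum_add_distrib]; simp only [add_mul]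
    _ ≤ _ := by
        rw [mul_add, div_eq_mul_one_div, div_eq_mul_one_div _ ((degG G v : ℝ) + 1)]
        gcongr <;> exact D.sum_degree_le_two_mul_ncard_edgeSet _

end Transport

lemma Nat.cast_lcm_div_left {K : Type*} [DivisionSemiring K] [CharZero K] (m n : ℕ)
    (hm : m ≠ 0) : ((Nat.lcm m n / m : ℕ) : K) = Nat.lcm m n * (1 / (m : K)) := by
  rw [Nat.cast_div (Nat.dvd_lcm_left m n) (by exact_mod_cast hm), div_eq_mul_one_div]

lemma Int.add_one_div_le_of_lt_mul {K : Type*} [Field K] [LinearOrder K] [IsStrictOrderedRing K]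
    {ρ : ℤ} {n c : ℕ} (hc : 0 < c) (h : (ρ : K) < n * c) : ((ρ : K) + 1) / c ≤ n := by
  have hρ : ρ + 1 ≤ n * c := by exact_mod_cast h
  rw [div_le_iff₀ (by exact_mod_cast hc)]
  exact_mod_cast hρ

theorem stmt11_general [Fintype V] (G : SimpleGraph V) (u v : V) (huv : G.Adj u v)
    (q : ℕ) (hq : q = Nat.lcm (degG G u + 1) (degG G v + 1))
    (ρ : ℤ) (hρ : (ρ : ℝ) = (q : ℝ) * EMDG G u v - (q : ℝ))
    (a b : ℕ) (ha : a = q / (degG G u + 1)) (hb : b = q / (degG G v + 1)) :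
    ∀ G' : SimpleGraph V, G ≤ G' → G' ≤ addPerm G u v → 0 < RicG G' u v →
      ((ρ : ℝ) + 1) / (2 * ((a : ℝ) + (b : ℝ))) ≤ ((G'.edgeSet \ G.edgeSet).ncard : ℝ) := by
  intro G' hle hle' hpos
  set N := (G'.edgeSet \ G.edgeSet).ncard
  have hu := nbrF_eq_of_le_addPerm hle hle'
  have hv := nbrF_eq_of_le_addPerm hle (addPerm_comm G u v ▸ hle')
  have hEMD : EMDG G u v ≤
      EMDG G' u v + 2 * N * (1 / ((degG G u : ℝ) + 1) + 1 / ((degG G v : ℝ) + 1)) := by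
    rw [show N = (G' \ G).edgeSet.ncard by rw [SimpleGraph.edgeSet_sdiff]]
    exact EMDG_le_add_of_planCostG_le hu hv _ fun z hz =>
      planCostG_le_add_ncard_edgeSet hle le_sup_sdiff hu hv huv hz
  have hEMD' : EMDG G' u v < 1 := by rw [RicG] at hpos; linarith
  have hq0 : 0 < q := hq ▸ Nat.lcm_pos (Nat.succ_pos _) (Nat.succ_pos _)
  have hqa : (a : ℝ) = q * (1 / ((degG G u : ℝ) + 1)) := by
    rw [ha, hq, Nat.cast_lcm_div_left _ _ (Nat.succ_ne_zero _)]
    push_cast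
    rfl
  have hqb : (b : ℝ) = q * (1 / ((degG G v : ℝ) + 1)) := by
    rw [hb, hq, Nat.lcm_comm, Nat.cast_lcm_div_left _ _ (Nat.succ_ne_zero _)]
    push_cast
    rfl
  have hρlt : (ρ : ℝ) < N * ↑(2 * (a + b)) := by
    have := mul_lt_mul_of_pos_left (show EMDG G u v - 1 <
      2 * N * (1 / ((degG G u : ℝ) + 1) + 1 / ((degG G v : ℝ) + 1)) by linarith)
      (Nat.cast_pos.mpr hq0 : (0 : ℝ) < q)
    push_cast
    rw [hρ, hqa, hqb]
    linarith
  have ha0 : 0 < a :=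
    ha ▸ Nat.div_pos (Nat.le_of_dvd hq0 (hq ▸ Nat.dvd_lcm_left _ _)) (Nat.succ_pos _)
  exact_mod_cast Int.add_one_div_le_of_lt_mul (by omega) hρlt

/-- assume `Ric_G(e) < 0`.  Then every set `E'` of permissible insertions
making the curvature of `e` positive has `|E'| ≥ (ρ+1)/(2(a+b))`, where
`q = lcm(deg_G(u)+1, deg_G(v)+1)`, `ρ = q·EMD_G(u,v) − q`, `a = q/(deg_G(u)+1)`, and
`b = q/(deg_G(v)+1)`.  (A graph `G'` with `G ≤ G' ≤ G*` is exactly `G + E'` for a set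
`E'` of permissible insertions, with `E' = E(G') \ E(G)`.) -/
theorem stmt11 [Fintype V] (G : SimpleGraph V) (u v : V) (huv : G.Adj u v)
    (hdeg : degG G u ≤ degG G v)
    (q : ℕ) (hq : q = Nat.lcm (degG G u + 1) (degG G v + 1))
    (ρ : ℤ) (hρ : (ρ : ℝ) = (q : ℝ) * EMDG G u v - (q : ℝ))
    (a b : ℕ) (ha : a = q / (degG G u + 1)) (hb : b = q / (degG G v + 1))
    (hneg : RicG G u v < 0) :
    ∀ G' : SimpleGraph V, G ≤ G' → G' ≤ addPerm G u v → 0 < RicG G' u v →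
      ((ρ : ℝ) + 1) / (2 * ((a : ℝ) + (b : ℝ))) ≤ ((G'.edgeSet \ G.edgeSet).ncard : ℝ) :=
  stmt11_general G u v huv q hq ρ hρ a b ha hb
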